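/- arXiv:1405.2560 — 3 statements merged into one kernel-verified Lean document; each statement's English description precedes it below -/
import Mathlib

section
/- For any permutation π of length n, the word f(π) = d_π(1) d_π(2) ... d_π(n), where d_π(c) is one plus the number of descents preceding the letter c in π, satisfies: every letter in {1,...,max(f(π))} occurs in f(π), and the rightmost occurrence of each letter i ∈ {1,...,max(f(π))−1} is preceded by an occurrence of i+1. -/
/-- Two lists of naturals are order-isomorphic: same length and same relative order. -/
def OrdIso (a b : List ℕ) : Prop :=
  a.length = b.length ∧
    ∀ i, i < a.length → ∀ j, j < a.length →
      (a.getD i 0 < a.getD j 0 ↔ b.getD i 0 < b.getD j 0)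

instance (a b : List ℕ) : Decidable (OrdIso a b) := by unfold OrdIso; infer_instance

/-- `σ` occurs as a pattern in `π`: some subsequence of `π` is order-isomorphic to `σ`. -/
def occursIn (σ π : List ℕ) : Prop := ∃ s ∈ π.sublists, OrdIso σ s

instance (σ π : List ℕ) : Decidable (occursIn σ π) := by unfold occursIn; infer_instance

/-- `l` is a permutation of `1, …, l.length`. -/
def IsPermList (l : List ℕ) : Prop := l.Perm ((List.range l.length).map (· + 1))

/-- The number of descents of `l` (positions `i` with `l i > l (i+1)`, 0-based). -/
def des (l : List ℕ) : ℕ :=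
  ((List.range (l.length - 1)).filter (fun i => decide (l.getD (i+1) 0 < l.getD i 0))).length

/-- `d_π(c)`: one plus the number of descents of `π` preceding the letter `c`. -/
def dval (l : List ℕ) (c : ℕ) : ℕ :=
  1 + ((List.range (l.idxOf c)).filter (fun i => decide (l.getD (i+1) 0 < l.getD i 0))).length

/-- The word `f(π) = d_π(1) d_π(2) ⋯ d_π(n)`. -/
def fword (l : List ℕ) : List ℕ := (List.range l.length).map (fun i => dval l (i+1))

/-- The largest letter of the word `w`. -/
def maxLetter (w : List ℕ) : ℕ := w.foldr max 0

/-- `p_w(j)`: positions (1-based, increasing) of the letter `j` in `w`. -/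
def posList (w : List ℕ) (j : ℕ) : List ℕ :=
  ((List.range w.length).filter (fun i => decide (w.getD i 0 = j))).map (· + 1)

/-- `g(w)`: the concatenation of the position lists `p_w(1), …, p_w(max w)`. -/
def gperm (w : List ℕ) : List ℕ := (List.range (maxLetter w)).flatMap (fun j => posList w (j+1))

/-- Membership in the poset 𝒜̂: positive letters, every letter in `{1,…,max w}` occurs,
and the rightmost occurrence of each `i < max w` is preceded by an occurrence of `i+1`. -/
def InAhat (w : List ℕ) : Prop :=
  (∀ x ∈ w, 1 ≤ x) ∧
  (∀ i, i < maxLetter w → i + 1 ∈ w) ∧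
  (∀ i, i < maxLetter w - 1 → ∃ t, t < w.length ∧ w.getD t 0 = i + 1 ∧
     (∀ s, s < w.length → t < s → w.getD s 0 ≠ i + 1) ∧ ∃ u, u < t ∧ w.getD u 0 = i + 2)

instance (w : List ℕ) : Decidable (InAhat w) := by unfold InAhat; infer_instance

/-- All permutations (as lists on `1..k`) of every length `k ≤ n`. -/
def permsUpTo (n : ℕ) : List (List ℕ) :=
  (List.range (n+1)).flatMap (fun k => ((List.range k).map (· + 1)).permutations)

/-- The interval `[a,b]` in the pattern containment poset, as a list. -/
def intervalList (a b : List ℕ) : List (List ℕ) :=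
  (permsUpTo b.length).filter (fun z => decide (occursIn a z ∧ occursIn z b))

/-- `μ` is the Möbius function of the poset of permutations under pattern containment:
`μ(a,a) = 1` and, for `a < b`, `∑_{a ≤ z ≤ b} μ(a,z) = 0`. -/
def MoebiusOn (μ : List ℕ → List ℕ → ℤ) : Prop :=
  (∀ a, μ a a = 1) ∧
  ∀ a b, IsPermList a → IsPermList b → occursIn a b → a ≠ b →
    ((intervalList a b).map (μ a)).sum = 0

/-- All lists of length `n` with entries in `{0, …, k-1}`. -/
def listsOf (n k : ℕ) : List (List ℕ) :=
  (List.range n).foldr (fun _ acc => (List.range k).flatMap (fun a => acc.map (a :: ·))) [[]]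

/-- The letters of `π` in the nonzero positions of `η`. -/
def embOcc (η π : List ℕ) : List ℕ :=
  ((List.range π.length).filter (fun i => decide (η.getD i 0 ≠ 0))).map (fun i => π.getD i 0)

/-- `η` is an embedding of `σ` in `π`: a sequence of length `|π|` whose nonzero positions
are the positions of an occurrence of `σ` in `π` and whose nonzero letters spell `σ`. -/
def IsEmbedding (η σ π : List ℕ) : Prop :=
  η.length = π.length ∧ η.filter (fun x => decide (x ≠ 0)) = σ ∧ OrdIso σ (embOcc η π)

/-- `η` is a normal embedding: nonzero at every letter of `π` lying in the tail of an
adjacency (i.e. every position whose predecessor holds the previous value). -/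
def IsNormalEmbedding (η σ π : List ℕ) : Prop :=
  IsEmbedding η σ π ∧
    ∀ i, i < π.length → 0 < i → π.getD i 0 = π.getD (i-1) 0 + 1 → η.getD i 0 ≠ 0

instance (η σ π : List ℕ) : Decidable (IsNormalEmbedding η σ π) := by
  unfold IsNormalEmbedding IsEmbedding; infer_instance

/-- The number of normal embeddings of `σ` in `π`. -/
def normalCount (σ π : List ℕ) : ℕ :=
  ((listsOf π.length (σ.length + 1)).filter (fun η => decide (IsNormalEmbedding η σ π))).length

/-- The total number of letters in all tails of all adjacencies of `π`;
equivalently, the number of adjacency pairs of `π`. -/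
def tailCount (π : List ℕ) : ℕ :=
  ((List.range π.length).filter (fun i => decide (0 < i ∧ π.getD i 0 = π.getD (i-1) 0 + 1))).length

/-- The number of occurrences of `σ` as a pattern in `π`. -/
def occCount (σ π : List ℕ) : ℕ :=
  ((List.range π.length).sublists.filter
    (fun s => decide (OrdIso σ (s.map (fun i => π.getD i 0))))).length

/-- All words of length `n` on the alphabet `{1, …, k}`. -/
def wordsOf (n k : ℕ) : List (List ℕ) := (listsOf n k).map (List.map (· + 1))

/-- All permutations of `1, …, n`, as lists. -/
def permsOfLen (n : ℕ) : List (List ℕ) := ((List.range n).map (· + 1)).permutations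

/-!
Let `D p` count the descents of `π` before position `p`, so that the letter of `f(π)` at the value
`π p` is `1 + D p`. Since `D` starts at `0`, is monotone and grows by at most one per step, `f(π)`
uses exactly the letters `1, …, 1 + D (n-1)`. For `i < D (n-1)`, the rightmost occurrence of `i + 1`
in `f(π)` comes from the largest value in the `(i+1)`-st run of `π`, which ends that run; the
value just after it is smaller and lies in the next run, so it contributes an earlier `i + 2`.
-/

def descentsBefore (π : List ℕ) (p : ℕ) : ℕ :=
  ((List.range p).filter (fun i => decide (π.getD (i+1) 0 < π.getD i 0))).length

lemma dval_eq_one_add_descentsBefore (π : List ℕ) (c : ℕ) :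
    dval π c = 1 + descentsBefore π (π.idxOf c) := rfl

@[simp] lemma descentsBefore_zero (π : List ℕ) : descentsBefore π 0 = 0 := rfl

lemma descentsBefore_succ (π : List ℕ) (p : ℕ) : descentsBefore π (p + 1) =
    descentsBefore π p + if π.getD (p+1) 0 < π.getD p 0 then 1 else 0 := by
  simp only [descentsBefore, List.range_succ, List.filter_append, List.length_append,
    List.filter_cons, List.filter_nil]
  split <;> simp_all

lemma monotone_descentsBefore (π : List ℕ) : Monotone (descentsBefore π) :=
  monotone_nat_of_le_succ fun p => by rw [descentsBefore_succ]; omega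

lemma exists_descentsBefore_eq (π : List ℕ) {m k : ℕ} (hk : k ≤ descentsBefore π m) :
    ∃ p ≤ m, descentsBefore π p = k := by
  induction m with
  | zero => exact ⟨0, le_rfl, by simp_all⟩
  | succ m ih =>
    by_cases hm : k ≤ descentsBefore π m
    · obtain ⟨p, hp, rfl⟩ := ih hm
      exact ⟨p, hp.trans m.le_succ, rfl⟩
    · refine ⟨m + 1, le_rfl, ?_⟩
      rw [descentsBefore_succ] at hk ⊢
      split_ifs at hk ⊢ <;> omega

lemma Nat.exists_greatest_lt {P : ℕ → Prop} [DecidablePred P] {n s : ℕ} (hs : s < n) (hP : P s) :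
    ∃ t < n, P t ∧ ∀ u < n, t < u → ¬P u :=
  ⟨Nat.findGreatest P (n - 1), (Nat.findGreatest_le _).trans_lt (by omega),
    Nat.findGreatest_spec (by omega) hP, fun _ hu htu => Nat.findGreatest_is_greatest htu (by omega)⟩

lemma maxLetter_le {w : List ℕ} {B : ℕ} (h : ∀ x ∈ w, x ≤ B) : maxLetter w ≤ B := by
  induction w with
  | nil => exact Nat.zero_le B
  | cons a l ih => exact max_le (h a (by simp)) (ih fun x hx => h x (List.mem_cons_of_mem _ hx))

@[simp] lemma fword_length (π : List ℕ) : (fword π).length = π.length := by simp [fword]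

lemma fword_getD (π : List ℕ) {t : ℕ} (ht : t < π.length) :
    (fword π).getD t 0 = 1 + descentsBefore π (π.idxOf (t + 1)) := by
  rw [List.getD_eq_getElem _ _ (by simpa using ht)]
  simp [fword, dval_eq_one_add_descentsBefore]

lemma one_le_of_mem_fword {π : List ℕ} {x : ℕ} (hx : x ∈ fword π) : 1 ≤ x := by
  obtain ⟨j, -, rfl⟩ := List.mem_map.mp hx
  rw [dval_eq_one_add_descentsBefore]
  omega

namespace IsPermList

variable {π : List ℕ}

lemma nodup (hπ : IsPermList π) : π.Nodup :=
  (List.Perm.nodup_iff hπ).mpr <| List.nodup_range.map fun _ _ h => Nat.succ_injective h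

lemma mem_iff (hπ : IsPermList π) {v : ℕ} : v ∈ π ↔ 1 ≤ v ∧ v ≤ π.length := by
  rw [List.Perm.mem_iff hπ, List.mem_map]
  constructor
  · rintro ⟨a, ha, rfl⟩
    simp at ha
    omega
  · exact fun h => ⟨v - 1, List.mem_range.mpr (by omega), by omega⟩

lemma getD_mem_Icc (hπ : IsPermList π) {p : ℕ} (hp : p < π.length) :
    1 ≤ π.getD p 0 ∧ π.getD p 0 ≤ π.length :=
  hπ.mem_iff.mp (List.getD_eq_getElem π 0 hp ▸ List.getElem_mem hp)

lemma idxOf_getD (hπ : IsPermList π) {p : ℕ} (hp : p < π.length) :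
    π.idxOf (π.getD p 0) = p := by
  rw [List.getD_eq_getElem π 0 hp]
  exact hπ.nodup.idxOf_getElem p hp

lemma idxOf_lt_length (hπ : IsPermList π) {c : ℕ} (h1 : 1 ≤ c) (hc : c ≤ π.length) :
    π.idxOf c < π.length :=
  List.idxOf_lt_length_iff.mpr (hπ.mem_iff.mpr ⟨h1, hc⟩)

lemma getD_idxOf (hπ : IsPermList π) {c : ℕ} (h1 : 1 ≤ c) (hc : c ≤ π.length) :
    π.getD (π.idxOf c) 0 = c := by
  rw [List.getD_eq_getElem π 0 (hπ.idxOf_lt_length h1 hc)]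
  exact List.getElem_idxOf _

lemma fword_getD_getD_sub_one (hπ : IsPermList π) {p : ℕ} (hp : p < π.length) :
    (fword π).getD (π.getD p 0 - 1) 0 = 1 + descentsBefore π p := by
  have := hπ.getD_mem_Icc hp
  rw [fword_getD π (by omega), Nat.sub_add_cancel this.1, hπ.idxOf_getD hp]

lemma maxLetter_fword_le (hπ : IsPermList π) :
    maxLetter (fword π) ≤ 1 + descentsBefore π (π.length - 1) := by
  refine maxLetter_le fun x hx => ?_
  obtain ⟨t, ht, rfl⟩ := List.mem_map.mp hx
  rw [List.mem_range] at ht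
  have := hπ.idxOf_lt_length (c := t + 1) (by omega) (by omega)
  have := monotone_descentsBefore π (show π.idxOf (t + 1) ≤ π.length - 1 by omega)
  rw [dval_eq_one_add_descentsBefore]
  omega

lemma exists_fword_getD_eq_succ (hπ : IsPermList π) (hne : π ≠ []) {i : ℕ}
    (hi : i ≤ descentsBefore π (π.length - 1)) :
    ∃ s < π.length, (fword π).getD s 0 = i + 1 := by
  obtain ⟨p, hp, hpi⟩ := exists_descentsBefore_eq π hi
  have hpn : p < π.length := by have := List.length_pos_iff.mpr hne; omega
  have := hπ.getD_mem_Icc hpn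
  exact ⟨π.getD p 0 - 1, by omega, by rw [hπ.fword_getD_getD_sub_one hpn, hpi, add_comm]⟩

/-- If the last occurrence of `i + 1` in `f(π)` is the value `t + 1` at position `p` of `π`, then
`p` ends the `(i+1)`-st run: otherwise the larger value `π (p+1)` would carry `i + 1` too. The
value after the descent then carries `i + 2` and is smaller than `t + 1`. -/
lemma exists_lt_fword_getD_eq_add_two (hπ : IsPermList π) {i t : ℕ} (ht : t < π.length)
    (hft : (fword π).getD t 0 = i + 1)
    (hlast : ∀ s < π.length, t < s → (fword π).getD s 0 ≠ i + 1)
    (hi : i < descentsBefore π (π.length - 1)) :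
    ∃ u < t, (fword π).getD u 0 = i + 2 := by
  rw [fword_getD π ht] at hft
  set p := π.idxOf (t + 1)
  have hp : p < π.length := hπ.idxOf_lt_length (by omega) (by omega)
  have hπp : π.getD p 0 = t + 1 := hπ.getD_idxOf (by omega) (by omega)
  have hp1 : p + 1 < π.length := by
    by_contra h
    rw [show p = π.length - 1 by omega] at hft
    omega
  have hq := hπ.getD_mem_Icc hp1
  have hfq := hπ.fword_getD_getD_sub_one hp1
  have hne : π.getD (p + 1) 0 ≠ t + 1 := fun h => by
    have := hπ.idxOf_getD hp1
    rw [h] at this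
    omega
  have hsucc := descentsBefore_succ π p
  rw [hπp] at hsucc
  have hdesc : π.getD (p + 1) 0 < t + 1 := by
    by_contra hasc
    rw [if_neg hasc] at hsucc
    exact hlast (π.getD (p + 1) 0 - 1) (by omega) (by omega) (by omega)
  rw [if_pos hdesc] at hsucc
  exact ⟨π.getD (p + 1) 0 - 1, by omega, by omega⟩

end IsPermList

/-- for any permutation `π`, the word `f(π)` lies in 𝒜̂. -/
theorem fword_mem_Ahat (π : List ℕ) (hπ : IsPermList π) : InAhat (fword π) := by
  rcases eq_or_ne π [] with rfl | hne
  · simp [InAhat, fword, maxLetter]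
  have hmax := hπ.maxLetter_fword_le
  refine ⟨fun x hx => one_le_of_mem_fword hx, fun i hi => ?_, fun i hi => ?_⟩
  · obtain ⟨s, hs, hfs⟩ := hπ.exists_fword_getD_eq_succ hne (i := i) (by omega)
    rw [← hfs, List.getD_eq_getElem _ _ (by simpa using hs)]
    exact List.getElem_mem _
  · obtain ⟨s, hs, hfs⟩ := hπ.exists_fword_getD_eq_succ hne (i := i) (by omega)
    obtain ⟨t, ht, hft, hlast⟩ :=
      Nat.exists_greatest_lt (P := fun s => (fword π).getD s 0 = i + 1) hs hfs
    rw [fword_length]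
    exact ⟨t, ht, hft, hlast, hπ.exists_lt_fword_getD_eq_add_two ht hft hlast (by omega)⟩
end

section
/- Let w be a word on positive integers with max(w) = k+1 such that every letter in {1,...,k+1} occurs in w and the rightmost occurrence of each i ≤ k is preceded by an occurrence of i+1. Then the permutation g(w), formed by concatenating the increasing lists of positions p_w(1), p_w(2), ..., p_w(k+1), has exactly k descents. -/
/-! `g(w)` is the concatenation of the `k + 1` blocks `p_w(1), …, p_w(k+1)`. Each block is
increasing and nonempty, so descents can only occur at the `k` junctions. At the junction of
`p_w(j)` and `p_w(j+1)` there is one: the last occurrence of `j` comes after some occurrence of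
`j + 1`, so the last entry of `p_w(j)` exceeds the first entry of `p_w(j+1)`. -/

lemma des_cons_cons (a b : ℕ) (l : List ℕ) :
    des (a :: b :: l) = (if b < a then 1 else 0) + des (b :: l) := by
  unfold des
  simp only [List.length_cons, Nat.add_sub_cancel, List.range_succ_eq_map, List.filter_cons,
    List.filter_map, List.getD_cons_succ, List.getD_cons_zero, Function.comp_def]
  by_cases h : b < a <;> simp [h, Nat.add_comm]

lemma des_append (a : List ℕ) {b : List ℕ} (hb : b ≠ []) :
    des (a ++ b) = des a + des b + (if b.headD 0 < a.getLastD 0 then 1 else 0) := by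
  obtain ⟨c, s, rfl⟩ := List.exists_cons_of_ne_nil hb
  induction a with
  | nil => simp [des]
  | cons x t ih =>
    cases t with
    | nil =>
      rw [List.singleton_append, des_cons_cons]
      simp [des, Nat.add_comm]
    | cons y t =>
      simp only [List.cons_append] at ih ⊢
      rw [des_cons_cons, ih, des_cons_cons]
      simp only [List.getLastD_cons]
      omega

lemma des_eq_zero_of_pairwise_lt {l : List ℕ} (h : l.Pairwise (· < ·)) : des l = 0 := by
  induction l with
  | nil => simp [des]
  | cons x t ih =>
    cases t with
    | nil => simp [des]
    | cons y s =>
      have hxy : x < y := List.rel_of_pairwise_cons h (List.mem_cons_self ..)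
      rw [des_cons_cons, if_neg (Nat.lt_asymm hxy), ih h.of_cons]

lemma des_flatten_eq_length_sub_one {B : List (List ℕ)}
    (hB : ∀ l ∈ B, l ≠ [] ∧ l.Pairwise (· < ·))
    (hdes : B.IsChain (fun l l' => l'.headD 0 < l.getLastD 0)) :
    des B.flatten = B.length - 1 := by
  induction B with
  | nil => simp [des]
  | cons l B ih =>
    cases B with
    | nil => simpa using des_eq_zero_of_pairwise_lt (hB l (by simp)).2
    | cons l' B =>
      obtain ⟨hl'ne, -⟩ := hB l' (by simp)
      obtain ⟨c, s, rfl⟩ := List.exists_cons_of_ne_nil hl'ne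
      rw [List.flatten_cons, des_append _ (by simp),
        ih (fun m hm => hB m (List.mem_cons_of_mem _ hm)) (List.isChain_cons_cons.mp hdes).2,
        des_eq_zero_of_pairwise_lt (hB l (by simp)).2]
      have hjunction : ((c :: s) :: B).flatten.headD 0 < l.getLastD 0 :=
        (List.isChain_cons_cons.mp hdes).1
      rw [if_pos hjunction]
      simp

lemma List.Pairwise.headD_le_of_mem {α : Type*} [Preorder α] {l : List α} {x : α}
    (h : l.Pairwise (· ≤ ·)) (hx : x ∈ l) (d : α) : l.headD d ≤ x := by
  simpa [List.headD_eq_head?, List.head?_eq_some_head (List.ne_nil_of_mem hx)] using h.rel_head hx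

lemma List.Pairwise.le_getLastD_of_mem {α : Type*} [Preorder α] {l : List α} {x : α}
    (h : l.Pairwise (· ≤ ·)) (hx : x ∈ l) (d : α) : x ≤ l.getLastD d := by
  simpa [List.getLastD_eq_getLast?, List.getLast?_eq_some_getLast (List.ne_nil_of_mem hx)]
    using h.rel_getLast hx

lemma pairwise_lt_posList (w : List ℕ) (j : ℕ) : (posList w j).Pairwise (· < ·) :=
  List.pairwise_map.mpr ((List.pairwise_lt_range.filter _).imp (by omega))

lemma mem_posList {w : List ℕ} {j i : ℕ} (hi : i < w.length) (hj : w.getD i 0 = j) :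
    i + 1 ∈ posList w j := by
  simp only [posList, List.mem_map, List.mem_filter, List.mem_range, decide_eq_true_eq]
  exact ⟨i, ⟨hi, hj⟩, rfl⟩

lemma posList_ne_nil {w : List ℕ} {j : ℕ} (hj : j ∈ w) : posList w j ≠ [] := by
  obtain ⟨i, hi, rfl⟩ := List.mem_iff_getElem.mp hj
  exact List.ne_nil_of_mem (mem_posList hi (List.getD_eq_getElem _ _ hi))

/-- if `w ∈ 𝒜̂` with `max w = k + 1`, then `g(w)` has exactly `k` descents. -/
theorem des_gperm (w : List ℕ) (k : ℕ) (hw : InAhat w) (hm : maxLetter w = k + 1) :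
    des (gperm w) = k := by
  obtain ⟨-, hocc, hlast⟩ := hw
  have hsorted j : (posList w j).Pairwise (· ≤ ·) := (pairwise_lt_posList w j).imp le_of_lt
  have hjunction : ∀ j < k,
      (posList w (j + 2)).headD 0 < (posList w (j + 1)).getLastD 0 := by
    intro j hj
    obtain ⟨t, ht, hwt, -, u, hut, hwu⟩ := hlast j (by omega)
    have hu := (hsorted _).headD_le_of_mem (mem_posList (by omega) hwu) 0
    have ht := (hsorted _).le_getLastD_of_mem (mem_posList ht hwt) 0
    omega
  rw [gperm, hm, List.flatMap_def, des_flatten_eq_length_sub_one]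
  · simp
  · simp only [List.mem_map, List.mem_range]
    rintro _ ⟨j, hj, rfl⟩
    exact ⟨posList_ne_nil (hocc j (by omega)), pairwise_lt_posList w _⟩
  · rw [List.isChain_map, List.isChain_range_succ]
    exact hjunction
end

section
/- If v and w are words in 𝒜̂ with max(v) = max(w) and v ≤ w in subword order, then g(v) ≤ g(w) in permutation pattern containment order. -/
/-!
A subword embedding `f` of `v` into `w` sends the position `p` of a letter `j` of `v` to the
position `f p` of the same letter `j` in `w`, and does so increasingly. Applied to every entry of
`g(v)`, it turns each block `p_v(j)` into a subsequence of `p_w(j)`; as both words have the same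
maximum, the blocks of `g(w)` come in the same order, so the image is a subsequence of `g(w)`,
and it is order-isomorphic to `g(v)` because `f` is increasing.
-/

theorem ordIso_map_of_strictMonoOn {F : ℕ → ℕ} {l : List ℕ} (hF : StrictMonoOn F {x | x ∈ l}) :
    OrdIso l (l.map F) := by
  refine ⟨(List.length_map F).symm, fun i hi j hj => ?_⟩
  rw [List.getD_eq_getElem _ _ hi, List.getD_eq_getElem _ _ hj,
    List.getD_eq_getElem _ _ (by simpa using hi), List.getD_eq_getElem _ _ (by simpa using hj),
    List.getElem_map, List.getElem_map]
  exact (hF.lt_iff_lt (List.getElem_mem hi) (List.getElem_mem hj)).symm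

theorem map_range_sublist_range {f : ℕ → ℕ} (hf : StrictMono f) {m n : ℕ}
    (hmn : ∀ i < m, f i < n) : ((List.range m).map f).Sublist (List.range n) := by
  have sorted : ((List.range m).map f).Pairwise (· < ·) :=
    List.pairwise_map.mpr (List.pairwise_lt_range.imp fun hij => hf hij)
  have subset : (List.range m).map f ⊆ List.range n := by
    intro x hx
    obtain ⟨i, hi, rfl⟩ := List.mem_map.mp hx
    exact List.mem_range.mpr (hmn i (List.mem_range.mp hi))
  exact List.sublist_of_subperm_of_pairwise (List.subperm_of_subset sorted.nodup subset)
    (sorted.imp le_of_lt) (List.pairwise_lt_range.imp le_of_lt)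

section SubwordEmbedding

variable {α : Type*} {v w : List α} {f : ℕ ↪o ℕ}

theorem getD_apply_of_getElem?_eq (hf : ∀ i, v[i]? = w[f i]?) (i : ℕ) (d : α) :
    w.getD (f i) d = v.getD i d := by
  rw [List.getD_eq_getElem?_getD, List.getD_eq_getElem?_getD, hf]

theorem lt_length_of_getElem?_eq (hf : ∀ i, v[i]? = w[f i]?) {i : ℕ} (hi : i < v.length) :
    f i < w.length := by
  have := hf i
  rw [List.getElem?_eq_getElem hi, eq_comm, List.getElem?_eq_some_iff] at this
  exact this.1

end SubwordEmbedding

section PositionLists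

variable {v w : List ℕ} {f : ℕ ↪o ℕ}

/-- `f` acting on 1-based positions. -/
abbrev shiftPos (f : ℕ ↪o ℕ) (p : ℕ) : ℕ := f (p - 1) + 1

theorem posList_map_shiftPos_sublist (hf : ∀ i, v[i]? = w[f i]?) (j : ℕ) :
    ((posList v j).map (shiftPos f)).Sublist (posList w j) := by
  have filter_image : ((List.range v.length).map f).filter (fun k => decide (w.getD k 0 = j)) =
      ((List.range v.length).filter (fun i => decide (v.getD i 0 = j))).map f := by
    rw [List.filter_map]
    congr 1
    exact List.filter_congr fun i _ => by simp only [Function.comp, getD_apply_of_getElem?_eq hf]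
  have hsub := ((map_range_sublist_range f.strictMono
    fun _ hi => lt_length_of_getElem?_eq hf hi).filter
      (fun k => decide (w.getD k 0 = j))).map (· + 1)
  rw [filter_image, List.map_map] at hsub
  simpa only [posList, List.map_map, Function.comp_def, shiftPos, Nat.add_sub_cancel] using hsub

theorem strictMonoOn_shiftPos : StrictMonoOn (shiftPos f) (Set.Ioi 0) := by
  intro a ha b hb hab
  have : f (a - 1) < f (b - 1) := f.lt_iff_lt.mpr (by rw [Set.mem_Ioi] at ha hb; omega)
  simpa using this

end PositionLists

theorem pos_of_mem_gperm {w : List ℕ} {x : ℕ} (hx : x ∈ gperm w) : 0 < x := by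
  simp only [gperm, posList, List.mem_flatMap, List.mem_map] at hx
  obtain ⟨_, _, p, _, rfl⟩ := hx
  exact p.succ_pos

theorem gperm_occursIn_general (v w : List ℕ)
    (hm : maxLetter v = maxLetter w) (h : List.Sublist v w) :
    occursIn (gperm v) (gperm w) := by
  obtain ⟨f, hf⟩ := List.sublist_iff_exists_orderEmbedding_getElem?_eq.mp h
  refine ⟨(gperm v).map (shiftPos f), List.mem_sublists.mpr ?_,
    ordIso_map_of_strictMonoOn (strictMonoOn_shiftPos.mono fun _ => pos_of_mem_gperm)⟩
  rw [gperm, gperm, ← hm, List.map_flatMap]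
  exact List.Sublist.flatMap_right _ fun j _ => posList_map_shiftPos_sublist hf (j + 1)

/-- if `v, w ∈ 𝒜̂` with equal maximum letters and `v ≤ w` in subword order,
then `g(v) ≤ g(w)` in pattern order. -/
theorem gperm_occursIn (v w : List ℕ) (hv : InAhat v) (hw : InAhat w)
    (hm : maxLetter v = maxLetter w) (h : List.Sublist v w) :
    occursIn (gperm v) (gperm w) :=
  gperm_occursIn_general v w hm h
end
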